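/- arXiv:1309.5065 — 5 statements merged into one kernel-verified Lean document; each statement's English description precedes it below -/
import Mathlib

section
/- Let (a, b) be D-pseudo-bosonic operators ([a,b]f = f on a dense domain D invariant under a, b, a†, b†), and suppose φ_0 ∈ D is nonzero with a φ_0 = 0. Define φ_n = b^n φ_0/√(n!). Then for all n ≥ 1, a φ_n = √n φ_{n-1}, and b φ_n = √(n+1) φ_{n+1} for all n ≥ 0; consequently N φ_n = n φ_n where N = b a. -/
/-!
Writing `ψ n = bⁿ φ₀`, the commutation relation on `D` turns `a (b ψ n)` into `b (a ψ n) + ψ n`,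
so induction from `a φ₀ = 0` gives `a ψ (n+1) = (n+1) ψ n`, while `b ψ n = ψ (n+1)` holds by
definition. Normalizing by `√n!` splits the factor `n + 1 = √(n+1) · √(n+1)` evenly between the
lowering and the raising relation, and composing the two gives `b a φ n = n φ n`.
-/

open scoped InnerProductSpace

namespace Module.End

variable {R M : Type*} [Semiring R] [AddCommGroup M] [Module R M]

theorem pow_apply_mem_of_mapsTo {b : Module.End R M} {D : Set M} (hb : Set.MapsTo b D D)
    {v : M} (hv : v ∈ D) (n : ℕ) : (b ^ n) v ∈ D := by
  rw [pow_apply]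
  exact hb.iterate n hv

theorem apply_pow_succ_apply_of_commutator {a b : Module.End R M} {D : Set M}
    (hb : Set.MapsTo b D D) (hcomm : ∀ f ∈ D, a (b f) - b (a f) = f)
    {v : M} (hv : v ∈ D) (hav : a v = 0) (n : ℕ) :
    a ((b ^ (n + 1)) v) = (n + 1) • (b ^ n) v := by
  induction n with
  | zero => simpa [hav] using hcomm v hv
  | succ k ih =>
    have hstep := hcomm _ (pow_apply_mem_of_mapsTo hb hv (k + 1))
    rw [pow_succ' b (k + 1), mul_apply, sub_eq_iff_eq_add.mp hstep, ih, map_nsmul,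
      ← mul_apply, ← pow_succ']
    module

end Module.End

theorem Complex.ofReal_sqrt_factorial_succ (n : ℕ) :
    ((√(n + 1).factorial : ℝ) : ℂ) = (√(n + 1 : ℝ) : ℂ) * (√n.factorial : ℝ) := by
  rw [Nat.factorial_succ, Nat.cast_mul, Real.sqrt_mul (by positivity), Complex.ofReal_mul]
  push_cast
  rfl

theorem Complex.ofReal_sqrt_mul_self_natCast_succ (n : ℕ) :
    (√(n + 1 : ℝ) : ℂ) * (√(n + 1 : ℝ) : ℂ) = n + 1 := by
  rw [← Complex.ofReal_mul, Real.mul_self_sqrt (by positivity)]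
  push_cast
  rfl

theorem Complex.ofReal_sqrt_natCast_succ_ne_zero (n : ℕ) : (√(n + 1 : ℝ) : ℂ) ≠ 0 :=
  Complex.ofReal_ne_zero.mpr (by positivity)

theorem Complex.ofReal_sqrt_factorial_ne_zero (n : ℕ) : ((√n.factorial : ℝ) : ℂ) ≠ 0 :=
  Complex.ofReal_ne_zero.mpr (Real.sqrt_ne_zero'.mpr (by positivity))

section Ladder

variable {M : Type*} [AddCommGroup M] [Module ℂ M] {a b : Module.End ℂ M} {ψ φ : ℕ → M}

theorem lowering_of_normalized (hψ : ∀ n, a (ψ (n + 1)) = (n + 1 : ℂ) • ψ n)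
    (hφ : ∀ n : ℕ, φ n = ((√n.factorial : ℝ) : ℂ)⁻¹ • ψ n) (n : ℕ) :
    a (φ (n + 1)) = (√(n + 1 : ℝ) : ℂ) • φ n := by
  rw [hφ, hφ, map_smul, hψ, smul_smul, smul_smul, Complex.ofReal_sqrt_factorial_succ,
    ← Complex.ofReal_sqrt_mul_self_natCast_succ]
  have := Complex.ofReal_sqrt_natCast_succ_ne_zero n
  have := Complex.ofReal_sqrt_factorial_ne_zero n
  congr 1
  field_simp

theorem raising_of_normalized (hψ : ∀ n, b (ψ n) = ψ (n + 1))
    (hφ : ∀ n : ℕ, φ n = ((√n.factorial : ℝ) : ℂ)⁻¹ • ψ n) (n : ℕ) :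
    b (φ n) = (√(n + 1 : ℝ) : ℂ) • φ (n + 1) := by
  rw [hφ, hφ, map_smul, hψ, smul_smul, Complex.ofReal_sqrt_factorial_succ]
  have := Complex.ofReal_sqrt_natCast_succ_ne_zero n
  congr 1
  field_simp

theorem number_of_ladder (h₀ : a (φ 0) = 0)
    (hlower : ∀ n, a (φ (n + 1)) = (√(n + 1 : ℝ) : ℂ) • φ n)
    (hraise : ∀ n, b (φ n) = (√(n + 1 : ℝ) : ℂ) • φ (n + 1)) (n : ℕ) :
    b (a (φ n)) = (n : ℂ) • φ n := by
  cases n with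
  | zero => simp [h₀]
  | succ k =>
    rw [hlower, map_smul, hraise, smul_smul, Complex.ofReal_sqrt_mul_self_natCast_succ]
    push_cast
    rfl

end Ladder

theorem statement_5_general
    {H : Type*} [NormedAddCommGroup H] [InnerProductSpace ℂ H]
    (D : Submodule ℂ H)
    (a b ad bd : H →ₗ[ℂ] H)
    (hstab : ∀ f ∈ D, a f ∈ D ∧ b f ∈ D ∧ ad f ∈ D ∧ bd f ∈ D)
    (hcomm : ∀ f ∈ D, a (b f) - b (a f) = f)
    (φ0 : H) (hφ0D : φ0 ∈ D) (hvac : a φ0 = 0)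
    (φ : ℕ → H)
    (hφ : ∀ n : ℕ, φ n = ((Real.sqrt n.factorial : ℂ))⁻¹ • (b ^ n) φ0) :
    (∀ n : ℕ, a (φ (n + 1)) = (Real.sqrt (n + 1) : ℂ) • φ n) ∧
    (∀ n : ℕ, b (φ n) = (Real.sqrt (n + 1) : ℂ) • φ (n + 1)) ∧
    (∀ n : ℕ, b (a (φ n)) = (n : ℂ) • φ n) := by
  have hb : Set.MapsTo b D D := fun f hf => (hstab f hf).2.1
  have hψ (n : ℕ) : a ((b ^ (n + 1)) φ0) = (n + 1 : ℂ) • (b ^ n) φ0 := by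
    rw [Module.End.apply_pow_succ_apply_of_commutator hb hcomm hφ0D hvac n,
      ← Nat.cast_smul_eq_nsmul ℂ]
    push_cast
    rfl
  have hbψ (n : ℕ) : b ((b ^ n) φ0) = (b ^ (n + 1)) φ0 := by
    rw [pow_succ', Module.End.mul_apply]
  have hlower := lowering_of_normalized hψ hφ
  have hraise := raising_of_normalized hbψ hφ
  have h₀ : a (φ 0) = 0 := by simp [hφ, hvac]
  exact ⟨hlower, hraise, number_of_ladder h₀ hlower hraise⟩

/-- For `D`-pseudo-bosonic operators `(a,b)` with vacuum `a φ₀ = 0`,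
`φ_n = b^n φ₀ / √(n!)` satisfies the ladder relations `a φ_n = √n φ_{n-1}` (n ≥ 1),
`b φ_n = √(n+1) φ_{n+1}`, and `N φ_n = n φ_n` with `N = b a`. -/
theorem statement_5
    {H : Type*} [NormedAddCommGroup H] [InnerProductSpace ℂ H]
    (D : Submodule ℂ H) (hD : Dense (D : Set H))
    (a b ad bd : H →ₗ[ℂ] H)
    (hstab : ∀ f ∈ D, a f ∈ D ∧ b f ∈ D ∧ ad f ∈ D ∧ bd f ∈ D)
    (hadja : ∀ f ∈ D, ∀ g ∈ D, ⟪a f, g⟫_ℂ = ⟪f, ad g⟫_ℂ)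
    (hadjb : ∀ f ∈ D, ∀ g ∈ D, ⟪b f, g⟫_ℂ = ⟪f, bd g⟫_ℂ)
    (hcomm : ∀ f ∈ D, a (b f) - b (a f) = f)
    (φ0 : H) (hφ0D : φ0 ∈ D) (hφ0 : φ0 ≠ 0) (hvac : a φ0 = 0)
    (φ : ℕ → H)
    (hφ : ∀ n : ℕ, φ n = ((Real.sqrt n.factorial : ℂ))⁻¹ • (b ^ n) φ0) :
    (∀ n : ℕ, a (φ (n + 1)) = (Real.sqrt (n + 1) : ℂ) • φ n) ∧
    (∀ n : ℕ, b (φ n) = (Real.sqrt (n + 1) : ℂ) • φ (n + 1)) ∧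
    (∀ n : ℕ, b (a (φ n)) = (n : ℂ) • φ n) :=
  statement_5_general D a b ad bd hstab hcomm φ0 hφ0D hvac φ hφ
end

section
/- With the hypotheses of D-pseudo-bosons (Assumptions D-pb 1 and D-pb 2: nonzero φ_0, Ψ_0 ∈ D with a φ_0 = 0 and b† Ψ_0 = 0), normalized so that ⟨φ_0, Ψ_0⟩ = 1, the families φ_n = b^n φ_0/√(n!) and Ψ_n = (a†)^n Ψ_0/√(n!) are biorthogonal: ⟨φ_n, Ψ_m⟩ = δ_{n,m} for all n, m ≥ 0. -/
/-!
Iterating `[a, b] = 1` from the vacuum `a φ₀ = 0` gives the ladder relation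
`a (b^(n+1) φ₀) = (n+1) b^n φ₀`. Moving one `a†` at a time across the inner product as an `a`
thus lowers `⟪b^n φ₀, (a†)^m Ψ₀⟫` to `n ⟪b^(n-1) φ₀, (a†)^(m-1) Ψ₀⟫`, until one side reaches its
vacuum: this leaves `n! ⟪φ₀, Ψ₀⟫` if `n = m`, and otherwise `0` because `a φ₀ = 0` or `b† Ψ₀ = 0`.
-/

open scoped InnerProductSpace

namespace PseudoBoson

section Ladder

variable {R M : Type*} [Ring R] [AddCommGroup M] [Module R M] {D : Submodule R M}
  {a b : M →ₗ[R] M}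

theorem apply_pow_succ_apply_of_apply_eq_zero (hb : ∀ f ∈ D, b f ∈ D)
    (hcomm : ∀ f ∈ D, a (b f) - b (a f) = f) {φ : M} (hφD : φ ∈ D) (hφ : a φ = 0) (n : ℕ) :
    a ((b ^ (n + 1)) φ) = (n + 1) • (b ^ n) φ := by
  induction n with
  | zero => simpa [hφ] using hcomm φ hφD
  | succ n ih =>
    have hmem : (b ^ (n + 1)) φ ∈ D := Module.End.pow_apply_mem_of_forall_mem _ hb φ hφD
    rw [pow_succ', Module.End.mul_apply, ← sub_add_cancel (a (b _)), hcomm _ hmem, ih,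
      map_nsmul, ← Module.End.mul_apply, ← pow_succ', succ_nsmul' _ (n + 1)]

end Ladder

section Biorthogonal

variable {𝕜 E : Type*} [RCLike 𝕜] [SeminormedAddCommGroup E] [InnerProductSpace 𝕜 E]
  {D : Submodule 𝕜 E} {a b ad bd : E →ₗ[𝕜] E}

theorem inner_pow_apply_pow_apply (hb : ∀ f ∈ D, b f ∈ D) (had : ∀ f ∈ D, ad f ∈ D)
    (hadja : ∀ f ∈ D, ∀ g ∈ D, ⟪a f, g⟫_𝕜 = ⟪f, ad g⟫_𝕜)
    (hadjb : ∀ f ∈ D, ∀ g ∈ D, ⟪b f, g⟫_𝕜 = ⟪f, bd g⟫_𝕜)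
    (hcomm : ∀ f ∈ D, a (b f) - b (a f) = f)
    {φ Ψ : E} (hφD : φ ∈ D) (hΨD : Ψ ∈ D) (hφ : a φ = 0) (hΨ : bd Ψ = 0) (n m : ℕ) :
    ⟪(b ^ n) φ, (ad ^ m) Ψ⟫_𝕜 = if n = m then (n.factorial : 𝕜) * ⟪φ, Ψ⟫_𝕜 else 0 := by
  have hbD (k : ℕ) : (b ^ k) φ ∈ D := Module.End.pow_apply_mem_of_forall_mem _ hb φ hφD
  have hadD (k : ℕ) : (ad ^ k) Ψ ∈ D := Module.End.pow_apply_mem_of_forall_mem _ had Ψ hΨD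
  induction m generalizing n with
  | zero =>
    cases n with
    | zero => simp
    | succ n =>
      rw [pow_zero, Module.End.one_apply, pow_succ', Module.End.mul_apply,
        hadjb _ (hbD n) _ hΨD, hΨ, inner_zero_right, if_neg n.succ_ne_zero]
  | succ m ih =>
    rw [pow_succ', Module.End.mul_apply, ← hadja _ (hbD n) _ (hadD m)]
    cases n with
    | zero => simp [hφ]
    | succ n =>
      rw [apply_pow_succ_apply_of_apply_eq_zero hb hcomm hφD hφ,
        ← Nat.cast_smul_eq_nsmul 𝕜, inner_smul_left, ih n, map_natCast]
      simp only [Nat.add_right_cancel_iff]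
      split_ifs
      · push_cast [Nat.factorial_succ]
        ring
      · rw [mul_zero]

end Biorthogonal

end PseudoBoson

open PseudoBoson in
theorem statement_6_general
    {H : Type*} [NormedAddCommGroup H] [InnerProductSpace ℂ H]
    (D : Submodule ℂ H)
    (a b ad bd : H →ₗ[ℂ] H)
    (hstab : ∀ f ∈ D, a f ∈ D ∧ b f ∈ D ∧ ad f ∈ D ∧ bd f ∈ D)
    (hadja : ∀ f ∈ D, ∀ g ∈ D, ⟪a f, g⟫_ℂ = ⟪f, ad g⟫_ℂ)
    (hadjb : ∀ f ∈ D, ∀ g ∈ D, ⟪b f, g⟫_ℂ = ⟪f, bd g⟫_ℂ)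
    (hcomm : ∀ f ∈ D, a (b f) - b (a f) = f)
    (φ0 Ψ0 : H) (hφ0D : φ0 ∈ D) (hΨ0D : Ψ0 ∈ D)
    (hvaca : a φ0 = 0) (hvacb : bd Ψ0 = 0)
    (hnorm : ⟪φ0, Ψ0⟫_ℂ = 1)
    (φ Ψ : ℕ → H)
    (hφ : ∀ n : ℕ, φ n = ((Real.sqrt n.factorial : ℂ))⁻¹ • (b ^ n) φ0)
    (hΨ : ∀ n : ℕ, Ψ n = ((Real.sqrt n.factorial : ℂ))⁻¹ • (ad ^ n) Ψ0) :
    ∀ n m : ℕ, ⟪φ n, Ψ m⟫_ℂ = if n = m then 1 else 0 := by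
  intro n m
  rw [hφ n, hΨ m, inner_smul_left, inner_smul_right,
    inner_pow_apply_pow_apply (fun f hf => (hstab f hf).2.1) (fun f hf => (hstab f hf).2.2.1)
      hadja hadjb hcomm hφ0D hΨ0D hvaca hvacb, hnorm, mul_one]
  split_ifs with h
  · subst h
    have hsq : (Real.sqrt n.factorial : ℂ) * Real.sqrt n.factorial = n.factorial := by
      exact_mod_cast Real.mul_self_sqrt (Nat.cast_nonneg _)
    have hne : (Real.sqrt n.factorial : ℂ) ≠ 0 := by
      exact_mod_cast (Real.sqrt_pos.2 (Nat.cast_pos.2 n.factorial_pos)).ne'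
    rw [map_inv₀, Complex.conj_ofReal, ← hsq]
    field_simp
  · simp

/-- Under Assumptions D-pb 1 and D-pb 2 (nonzero vacua `a φ₀ = 0`,
`b† Ψ₀ = 0`) normalized with `⟨φ₀, Ψ₀⟩ = 1`, the families `φ_n = b^n φ₀/√(n!)` and
`Ψ_n = (a†)^n Ψ₀/√(n!)` are biorthogonal: `⟨φ_n, Ψ_m⟩ = δ_{nm}`. -/
theorem statement_6
    {H : Type*} [NormedAddCommGroup H] [InnerProductSpace ℂ H]
    (D : Submodule ℂ H) (hD : Dense (D : Set H))
    (a b ad bd : H →ₗ[ℂ] H)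
    (hstab : ∀ f ∈ D, a f ∈ D ∧ b f ∈ D ∧ ad f ∈ D ∧ bd f ∈ D)
    (hadja : ∀ f ∈ D, ∀ g ∈ D, ⟪a f, g⟫_ℂ = ⟪f, ad g⟫_ℂ)
    (hadjb : ∀ f ∈ D, ∀ g ∈ D, ⟪b f, g⟫_ℂ = ⟪f, bd g⟫_ℂ)
    (hcomm : ∀ f ∈ D, a (b f) - b (a f) = f)
    (φ0 Ψ0 : H) (hφ0D : φ0 ∈ D) (hΨ0D : Ψ0 ∈ D)
    (hφ0 : φ0 ≠ 0) (hΨ0 : Ψ0 ≠ 0)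
    (hvaca : a φ0 = 0) (hvacb : bd Ψ0 = 0)
    (hnorm : ⟪φ0, Ψ0⟫_ℂ = 1)
    (φ Ψ : ℕ → H)
    (hφ : ∀ n : ℕ, φ n = ((Real.sqrt n.factorial : ℂ))⁻¹ • (b ^ n) φ0)
    (hΨ : ∀ n : ℕ, Ψ n = ((Real.sqrt n.factorial : ℂ))⁻¹ • (ad ^ n) Ψ0) :
    ∀ n m : ℕ, ⟪φ n, Ψ m⟫_ℂ = if n = m then 1 else 0 :=
  statement_6_general D a b ad bd hstab hadja hadjb hcomm φ0 Ψ0 hφ0D hΨ0D hvaca hvacb hnorm φ Ψ hφ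
    hΨ
end

section
/- (Proposition 2.2, positivity of the metric) Let (φ_n), (Ψ_n) ⊆ D be D-quasi bases with Ψ_n = Θ φ_n for a self-adjoint invertible operator Θ with Θ D ⊆ D and Θ⁻¹ D ⊆ D. Then for every nonzero f ∈ D, ⟨f, Θ f⟩ = Σ_n |⟨Ψ_n, f⟩|² > 0. -/
open scoped InnerProductSpace

/-- Proposition 2.2, positivity of the metric: if `(φ_n)`, `(Ψ_n)` are
`D`-quasi bases with `Ψ_n = Θ φ_n` for a self-adjoint invertible `Θ` preserving `D`
together with its inverse, then for every nonzero `f ∈ D`,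
`⟨f, Θ f⟩ = ∑_n |⟨Ψ_n, f⟩|² > 0`. -/
theorem statement_8
    {H : Type*} [NormedAddCommGroup H] [InnerProductSpace ℂ H]
    (D : Submodule ℂ H) (hD : Dense (D : Set H))
    (φ Ψ : ℕ → H) (hφD : ∀ n, φ n ∈ D) (hΨD : ∀ n, Ψ n ∈ D)
    (hqb : ∀ f ∈ D, ∀ g ∈ D,
        HasSum (fun n : ℕ => ⟪f, Ψ n⟫_ℂ * ⟪φ n, g⟫_ℂ) ⟪f, g⟫_ℂ ∧
        HasSum (fun n : ℕ => ⟪f, φ n⟫_ℂ * ⟪Ψ n, g⟫_ℂ) ⟪f, g⟫_ℂ)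
    (Θ Θi : H →ₗ[ℂ] H)
    (hsa : ∀ f g : H, ⟪Θ f, g⟫_ℂ = ⟪f, Θ g⟫_ℂ)
    (hinv : (∀ f : H, Θi (Θ f) = f) ∧ (∀ f : H, Θ (Θi f) = f))
    (hΘD : ∀ f ∈ D, Θ f ∈ D) (hΘiD : ∀ f ∈ D, Θi f ∈ D)
    (hΨΘ : ∀ n : ℕ, Ψ n = Θ (φ n)) :
    ∀ f ∈ D, f ≠ 0 →
      HasSum (fun n : ℕ => ((‖⟪Ψ n, f⟫_ℂ‖ ^ 2 : ℝ) : ℂ)) ⟪f, Θ f⟫_ℂ ∧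
      0 < (⟪f, Θ f⟫_ℂ).re := by
  intro f hf hf0
  have hΘf : Θ f ∈ D := hΘD f hf
  obtain ⟨h1, -⟩ := hqb f hf (Θ f) hΘf
  have key : ∀ n : ℕ, ⟪f, Ψ n⟫_ℂ * ⟪φ n, Θ f⟫_ℂ = ((‖⟪Ψ n, f⟫_ℂ‖ ^ 2 : ℝ) : ℂ) := by
    intro n
    have h2 : ⟪φ n, Θ f⟫_ℂ = ⟪Ψ n, f⟫_ℂ := by
      rw [hΨΘ n, hsa]
    rw [h2, ← inner_conj_symm (Ψ n) f, RCLike.mul_conj]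
    push_cast [RCLike.norm_conj]
    rfl
  have hS : HasSum (fun n : ℕ => ((‖⟪Ψ n, f⟫_ℂ‖ ^ 2 : ℝ) : ℂ)) ⟪f, Θ f⟫_ℂ := by
    simpa only [key] using h1
  refine ⟨hS, ?_⟩
  -- real part version
  have hre : HasSum (fun n : ℕ => (‖⟪Ψ n, f⟫_ℂ‖ ^ 2 : ℝ)) (⟪f, Θ f⟫_ℂ).re := by
    simpa [← Complex.ofReal_pow] using hS.mapL Complex.reCLM
  -- find n with nonzero inner product
  have hne : ∃ n, ⟪Ψ n, f⟫_ℂ ≠ 0 := by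
    by_contra h
    push_neg at h
    have hzero : ∀ g ∈ D, ⟪g, f⟫_ℂ = 0 := by
      intro g hg
      obtain ⟨-, h2⟩ := hqb g hg f hf
      have : HasSum (fun n : ℕ => ⟪g, φ n⟫_ℂ * ⟪Ψ n, f⟫_ℂ) 0 := by
        simpa [h] using hasSum_zero (α := ℂ) (β := ℕ)
      exact (h2.unique this)
    have hfz : f = 0 := by
      have hcont : Continuous fun g : H => ⟪g, f⟫_ℂ := continuous_id.inner continuous_const
      have heq : (fun g : H => ⟪g, f⟫_ℂ) = fun _ => (0 : ℂ) :=
        Continuous.ext_on hD hcont continuous_const (fun g hg => hzero g hg)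
      have : ⟪f, f⟫_ℂ = 0 := by
        have := congrFun heq f
        simpa using this
      exact inner_self_eq_zero.mp this
    exact hf0 hfz
  obtain ⟨n₀, hn₀⟩ := hne
  have hpos : 0 < ‖⟪Ψ n₀, f⟫_ℂ‖ ^ 2 := pow_pos (norm_pos_iff.mpr hn₀) 2
  calc (0 : ℝ) < ∑' n, (‖⟪Ψ n, f⟫_ℂ‖ ^ 2 : ℝ) :=
        Summable.tsum_pos hre.summable (fun i => sq_nonneg _) n₀ hpos
    _ = (⟪f, Θ f⟫_ℂ).re := hre.tsum_eq
end

section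
/- (Proposition 2.1, forward direction) Suppose (φ_n) and (Ψ_n) are biorthogonal D-quasi bases, Θ is self-adjoint and invertible with Θ D ⊆ D, Θ⁻¹ D ⊆ D, and (a, b†) are Θ-conjugate: a f = Θ⁻¹ b† Θ f for all f ∈ D, with the normalization ⟨φ_0, Θ φ_0⟩ = 1. Then Ψ_n = Θ φ_n for all n ≥ 0. -/
open scoped InnerProductSpace

lemma dense_ext_inner {H : Type*} [NormedAddCommGroup H] [InnerProductSpace ℂ H]
    {s : Set H} (hD : Dense s) {x y : H}
    (h : ∀ f ∈ s, ⟪f, x⟫_ℂ = ⟪f, y⟫_ℂ) : x = y := by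
  apply ext_inner_left ℂ
  intro v
  have hc : ∀ z : H, Continuous fun v : H => ⟪v, z⟫_ℂ := fun z =>
    continuous_inner.comp (continuous_id.prodMk continuous_const)
  have := Continuous.ext_on hD (hc x) (hc y) h
  exact congrFun this v

/-- Proposition 2.1, forward direction: if `(φ_n)`, `(Ψ_n)` are
biorthogonal `D`-quasi bases built from the pseudo-bosonic pair `(a,b)`, `Θ` is
self-adjoint, invertible, preserving `D` together with its inverse, `(a, b†)` are
`Θ`-conjugate (`a f = Θ⁻¹ b† Θ f` on `D`) and `⟨φ₀, Θ φ₀⟩ = 1`, then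
`Ψ_n = Θ φ_n` for all `n`. -/
theorem statement_9
    {H : Type*} [NormedAddCommGroup H] [InnerProductSpace ℂ H]
    (D : Submodule ℂ H) (hD : Dense (D : Set H))
    (a b ad bd : H →ₗ[ℂ] H)
    (hstab : ∀ f ∈ D, a f ∈ D ∧ b f ∈ D ∧ ad f ∈ D ∧ bd f ∈ D)
    (hadja : ∀ f ∈ D, ∀ g ∈ D, ⟪a f, g⟫_ℂ = ⟪f, ad g⟫_ℂ)
    (hadjb : ∀ f ∈ D, ∀ g ∈ D, ⟪b f, g⟫_ℂ = ⟪f, bd g⟫_ℂ)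
    (hcomm : ∀ f ∈ D, a (b f) - b (a f) = f)
    (φ0 Ψ0 : H) (hφ0D : φ0 ∈ D) (hΨ0D : Ψ0 ∈ D)
    (hφ0 : φ0 ≠ 0) (hΨ0 : Ψ0 ≠ 0)
    (hvaca : a φ0 = 0) (hvacb : bd Ψ0 = 0)
    (φ Ψ : ℕ → H)
    (hφ : ∀ n : ℕ, φ n = ((Real.sqrt n.factorial : ℂ))⁻¹ • (b ^ n) φ0)
    (hΨ : ∀ n : ℕ, Ψ n = ((Real.sqrt n.factorial : ℂ))⁻¹ • (ad ^ n) Ψ0)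
    (hbio : ∀ n m : ℕ, ⟪φ n, Ψ m⟫_ℂ = if n = m then 1 else 0)
    (hqb : ∀ f ∈ D, ∀ g ∈ D,
        HasSum (fun n : ℕ => ⟪f, Ψ n⟫_ℂ * ⟪φ n, g⟫_ℂ) ⟪f, g⟫_ℂ ∧
        HasSum (fun n : ℕ => ⟪f, φ n⟫_ℂ * ⟪Ψ n, g⟫_ℂ) ⟪f, g⟫_ℂ)
    (Θ Θi : H →ₗ[ℂ] H)
    (hsa : ∀ f g : H, ⟪Θ f, g⟫_ℂ = ⟪f, Θ g⟫_ℂ)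
    (hinv : (∀ f : H, Θi (Θ f) = f) ∧ (∀ f : H, Θ (Θi f) = f))
    (hΘD : ∀ f ∈ D, Θ f ∈ D) (hΘiD : ∀ f ∈ D, Θi f ∈ D)
    (hconj : ∀ f ∈ D, a f = Θi (bd (Θ f)))
    (hnorm : ⟪φ 0, Θ (φ 0)⟫_ℂ = 1) :
    ∀ n : ℕ, Ψ n = Θ (φ n) := by
  -- membership of iterates in D
  have hbn : ∀ n : ℕ, (b ^ n) φ0 ∈ D := by
    intro n; induction n with
    | zero => simpa using hφ0D
    | succ n ih =>
      rw [pow_succ']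
      exact (hstab _ ih).2.1
  have hadn : ∀ n : ℕ, (ad ^ n) Ψ0 ∈ D := by
    intro n; induction n with
    | zero => simpa using hΨ0D
    | succ n ih =>
      rw [pow_succ']
      exact (hstab _ ih).2.2.1
  have hφD : ∀ n : ℕ, φ n ∈ D := by
    intro n; rw [hφ]; exact D.smul_mem _ (hbn n)
  have hΨD : ∀ n : ℕ, Ψ n ∈ D := by
    intro n; rw [hΨ]; exact D.smul_mem _ (hadn n)
  -- sqrt factorial nonzero
  have hsq : ∀ n : ℕ, ((Real.sqrt n.factorial : ℂ)) ≠ 0 := by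
    intro n
    simp only [ne_eq, Complex.ofReal_eq_zero]
    positivity
  have hsqn : ∀ n : ℕ, ((Real.sqrt (n+1) : ℂ)) ≠ 0 := by
    intro n
    simp only [ne_eq, Complex.ofReal_eq_zero]
    positivity
  -- recursions
  have hsqfac : ∀ n : ℕ,
      ((Real.sqrt (n+1).factorial : ℂ)) = (Real.sqrt (n+1) : ℂ) * (Real.sqrt n.factorial : ℂ) := by
    intro n
    rw [← Complex.ofReal_mul, ← Real.sqrt_mul (by positivity)]
    congr 2
    rw [Nat.factorial_succ]
    push_cast
    ring
  have hφrec : ∀ n : ℕ, φ (n+1) = ((Real.sqrt (n+1) : ℂ))⁻¹ • b (φ n) := by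
    intro n
    rw [hφ, hφ, hsqfac, mul_inv, LinearMap.map_smul, pow_succ', Module.End.mul_apply,
      smul_smul]
  have hΨrec : ∀ n : ℕ, Ψ (n+1) = ((Real.sqrt (n+1) : ℂ))⁻¹ • ad (Ψ n) := by
    intro n
    rw [hΨ, hΨ, hsqfac, mul_inv, LinearMap.map_smul, pow_succ', Module.End.mul_apply,
      smul_smul]
  -- Θi is symmetric
  have hsai : ∀ f g : H, ⟪Θi f, g⟫_ℂ = ⟪f, Θi g⟫_ℂ := by
    intro f g
    calc ⟪Θi f, g⟫_ℂ = ⟪Θi f, Θ (Θi g)⟫_ℂ := by rw [hinv.2]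
    _ = ⟪Θ (Θi f), Θi g⟫_ℂ := (hsa _ _).symm
    _ = ⟪f, Θi g⟫_ℂ := by rw [hinv.2]
  -- key intertwining: ad (Θ h) = Θ (b h) for h ∈ D
  have hint : ∀ h ∈ D, ad (Θ h) = Θ (b h) := by
    intro h hh
    apply dense_ext_inner hD
    intro f hf
    calc ⟪f, ad (Θ h)⟫_ℂ = ⟪a f, Θ h⟫_ℂ := (hadja f hf _ (hΘD h hh)).symm
    _ = ⟪Θi (bd (Θ f)), Θ h⟫_ℂ := by rw [← hconj f hf]
    _ = ⟪bd (Θ f), Θi (Θ h)⟫_ℂ := hsai _ _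
    _ = ⟪bd (Θ f), h⟫_ℂ := by rw [hinv.1]
    _ = (starRingEnd ℂ) ⟪h, bd (Θ f)⟫_ℂ := (inner_conj_symm _ _).symm
    _ = (starRingEnd ℂ) ⟪b h, Θ f⟫_ℂ := by rw [← hadjb h hh _ (hΘD f hf)]
    _ = ⟪Θ f, b h⟫_ℂ := inner_conj_symm _ _
    _ = ⟪f, Θ (b h)⟫_ℂ := hsa _ _
  -- bd (Θ φ0) = 0
  have hvac : bd (Θ φ0) = 0 := by
    have := hconj φ0 hφ0D
    rw [hvaca] at this
    have : Θ (Θi (bd (Θ φ0))) = Θ 0 := by rw [← this]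
    rwa [hinv.2, map_zero] at this
  -- ⟪φ m, Θ φ0⟫ = δ_{m0}
  have hdelta : ∀ m : ℕ, ⟪φ m, Θ φ0⟫_ℂ = if m = 0 then 1 else 0 := by
    intro m
    cases m with
    | zero =>
      simp only [if_pos rfl]
      have hφ00 : φ 0 = φ0 := by rw [hφ]; simp
      rw [← hφ00]; exact hnorm
    | succ m =>
      simp only [Nat.succ_ne_zero, if_false]
      rw [hφrec, inner_smul_left, hadjb _ (hφD m) _ (hΘD _ hφ0D), hvac,
        inner_zero_right, mul_zero]
  -- base case: Ψ 0 = Θ φ0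
  have hbase : Ψ 0 = Θ φ0 := by
    apply dense_ext_inner hD
    intro f hf
    have h1 := (hqb f hf (Ψ 0) (hΨD 0)).1
    have h2 := (hqb f hf (Θ φ0) (hΘD _ hφ0D)).1
    have heq : (fun n => ⟪f, Ψ n⟫_ℂ * ⟪φ n, Ψ 0⟫_ℂ)
        = fun n => ⟪f, Ψ n⟫_ℂ * ⟪φ n, Θ φ0⟫_ℂ := by
      funext n
      rw [hbio, hdelta]
    rw [heq] at h1
    exact h1.unique h2
  -- induction
  intro n
  induction n with
  | zero =>
    have hφ00 : φ 0 = φ0 := by rw [hφ]; simp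
    rw [hφ00]; exact hbase
  | succ n ih =>
    rw [hΨrec, ih, hint _ (hφD n), hφrec, LinearMap.map_smul]
end

section
/- Let N = b a and N† = a† b† with (a,b) D-pseudo-bosonic, φ_n = b^n φ_0/√(n!), Ψ_n = (a†)^n Ψ_0/√(n!) as above. Then N φ_n = n φ_n and N† Ψ_n = n Ψ_n for all n ≥ 0; moreover if Ψ_n = Θ φ_n for all n and (φ_n),(Ψ_n) are complete biorthogonal D-quasi bases with Θ, Θ⁻¹ preserving D, then N f = Θ⁻¹ N† Θ f for all f ∈ D. -/
open scoped InnerProductSpace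

/-!
Induction on `[a, b] = 1` gives the ladder relation `a bⁿ⁺¹ φ₀ = (n + 1) bⁿ φ₀`, hence
`N φₙ = n φₙ`. Taking adjoints on the dense domain `D` turns `[a, b] = 1` into `[b†, a†] = 1`,
and `b† Ψ₀ = 0`, so the same argument gives `N† Ψₙ = n Ψₙ`. Finally, `Θ N f` and `N† Θ f` both
pair with `φₙ` to `n ⟪Ψₙ, f⟫`, so the quasi-basis expansion and density of `D` identify them.
-/

section Ladder

variable {R M : Type*} [CommRing R] [AddCommGroup M] [Module R M]
  {D : Submodule R M} {A B : Module.End R M} {v : M}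

theorem lower_pow_succ_apply_of_commutator (hB : ∀ f ∈ D, B f ∈ D)
    (hcomm : ∀ f ∈ D, A (B f) - B (A f) = f) (hv : v ∈ D) (hA : A v = 0) (n : ℕ) :
    A ((B ^ (n + 1)) v) = (n + 1) • (B ^ n) v := by
  induction n with
  | zero => simpa [hA] using hcomm v hv
  | succ n ih =>
    have hcomm_n := sub_eq_iff_eq_add.mp <|
      hcomm _ (Module.End.pow_apply_mem_of_forall_mem (n + 1) hB v hv)
    rw [pow_succ', Module.End.mul_apply, hcomm_n, ih, map_nsmul, ← Module.End.mul_apply,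
      ← pow_succ', succ_nsmul _ (n + 1), add_comm]

theorem raise_lower_pow_apply_of_commutator (hB : ∀ f ∈ D, B f ∈ D)
    (hcomm : ∀ f ∈ D, A (B f) - B (A f) = f) (hv : v ∈ D) (hA : A v = 0) (n : ℕ) (c : R) :
    B (A (c • (B ^ n) v)) = (n : R) • c • (B ^ n) v := by
  rw [map_smul, map_smul, Nat.cast_smul_eq_nsmul, smul_comm]
  congr 1
  cases n with
  | zero => simp [hA]
  | succ n =>
    rw [lower_pow_succ_apply_of_commutator hB hcomm hv hA, map_nsmul, ← Module.End.mul_apply,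
      ← pow_succ']

end Ladder

section FormalAdjoint

variable {𝕜 E : Type*} [RCLike 𝕜] [NormedAddCommGroup E] [InnerProductSpace 𝕜 E]
  {D : Submodule 𝕜 E}

def IsFormalAdjointOn (D : Submodule 𝕜 E) (T S : E →ₗ[𝕜] E) : Prop :=
  ∀ f ∈ D, ∀ g ∈ D, ⟪T f, g⟫_𝕜 = ⟪f, S g⟫_𝕜

namespace IsFormalAdjointOn

variable {T T' S S' : E →ₗ[𝕜] E}

theorem symm (h : IsFormalAdjointOn D T S) : IsFormalAdjointOn D S T := fun f hf g hg => by
  rw [← inner_conj_symm, ← h g hg f hf, inner_conj_symm]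

theorem comp (hT : IsFormalAdjointOn D T T') (hS : IsFormalAdjointOn D S S')
    (hTD : ∀ f ∈ D, T f ∈ D) (hS'D : ∀ f ∈ D, S' f ∈ D) :
    IsFormalAdjointOn D (S ∘ₗ T) (T' ∘ₗ S') := fun f hf g hg => by
  rw [LinearMap.comp_apply, hS _ (hTD f hf) g hg, hT f hf _ (hS'D g hg)]
  rfl

theorem commutator_adjoint_eq_self (hD : Dense (D : Set E)) {a b ad bd : E →ₗ[𝕜] E}
    (ha : IsFormalAdjointOn D a ad) (hb : IsFormalAdjointOn D b bd)
    (haD : ∀ f ∈ D, a f ∈ D) (hbD : ∀ f ∈ D, b f ∈ D)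
    (hadD : ∀ f ∈ D, ad f ∈ D) (hbdD : ∀ f ∈ D, bd f ∈ D)
    (hcomm : ∀ f ∈ D, a (b f) - b (a f) = f) {f : E} (hf : f ∈ D) :
    bd (ad f) - ad (bd f) = f := by
  refine hD.eq_of_inner_right 𝕜 fun g hg => ?_
  have hab : ⟪a (b g), f⟫_𝕜 = ⟪g, bd (ad f)⟫_𝕜 := hb.comp ha hbD hadD g hg f hf
  have hba : ⟪b (a g), f⟫_𝕜 = ⟪g, ad (bd f)⟫_𝕜 := ha.comp hb haD hbdD g hg f hf
  rw [inner_sub_right, ← hab, ← hba, ← inner_sub_left, hcomm g hg]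

end IsFormalAdjointOn

theorem eq_of_inner_quasiBasis (hD : Dense (D : Set E)) {φ Ψ : ℕ → E}
    (hqb : ∀ f ∈ D, ∀ g ∈ D, HasSum (fun n => ⟪f, Ψ n⟫_𝕜 * ⟪φ n, g⟫_𝕜) ⟪f, g⟫_𝕜)
    {x y : E} (hx : x ∈ D) (hy : y ∈ D) (h : ∀ n, ⟪φ n, x⟫_𝕜 = ⟪φ n, y⟫_𝕜) : x = y :=
  hD.eq_of_inner_right 𝕜 fun g hg =>
    (hqb g hg x hx).unique (by simpa only [h] using hqb g hg y hy)

theorem IsFormalAdjointOn.intertwine_of_quasiBasis (hD : Dense (D : Set E))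
    {N Nd Θ : E →ₗ[𝕜] E} (hN : IsFormalAdjointOn D N Nd) (hND : ∀ f ∈ D, N f ∈ D)
    (hNdD : ∀ f ∈ D, Nd f ∈ D) (hΘD : ∀ f ∈ D, Θ f ∈ D) (hΘ : ∀ f g, ⟪Θ f, g⟫_𝕜 = ⟪f, Θ g⟫_𝕜)
    {φ Ψ : ℕ → E} (hφD : ∀ n, φ n ∈ D) (hΨΘ : ∀ n, Ψ n = Θ (φ n))
    (hqb : ∀ f ∈ D, ∀ g ∈ D, HasSum (fun n => ⟪f, Ψ n⟫_𝕜 * ⟪φ n, g⟫_𝕜) ⟪f, g⟫_𝕜)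
    (μ : ℕ → ℝ) (hNφ : ∀ n, N (φ n) = (μ n : 𝕜) • φ n) (hNdΨ : ∀ n, Nd (Ψ n) = (μ n : 𝕜) • Ψ n)
    {f : E} (hf : f ∈ D) : Θ (N f) = Nd (Θ f) := by
  have hΨD : ∀ n, Ψ n ∈ D := fun n => hΨΘ n ▸ hΘD _ (hφD n)
  refine eq_of_inner_quasiBasis hD hqb (hΘD _ (hND f hf)) (hNdD _ (hΘD f hf)) fun n => ?_
  calc ⟪φ n, Θ (N f)⟫_𝕜 = ⟪Nd (Ψ n), f⟫_𝕜 := by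
        rw [← hΘ, ← hΨΘ, hN.symm _ (hΨD n) f hf]
    _ = ⟪N (φ n), Θ f⟫_𝕜 := by
        rw [hNdΨ, hNφ, inner_smul_left, inner_smul_left, hΨΘ, hΘ]
    _ = ⟪φ n, Nd (Θ f)⟫_𝕜 := hN _ (hφD n) _ (hΘD f hf)

end FormalAdjoint

theorem statement_19_general
    {H : Type*} [NormedAddCommGroup H] [InnerProductSpace ℂ H]
    (D : Submodule ℂ H) (hD : Dense (D : Set H))
    (a b ad bd : H →ₗ[ℂ] H)
    (hstab : ∀ f ∈ D, a f ∈ D ∧ b f ∈ D ∧ ad f ∈ D ∧ bd f ∈ D)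
    (hadja : ∀ f ∈ D, ∀ g ∈ D, ⟪a f, g⟫_ℂ = ⟪f, ad g⟫_ℂ)
    (hadjb : ∀ f ∈ D, ∀ g ∈ D, ⟪b f, g⟫_ℂ = ⟪f, bd g⟫_ℂ)
    (hcomm : ∀ f ∈ D, a (b f) - b (a f) = f)
    (φ0 Ψ0 : H) (hφ0D : φ0 ∈ D) (hΨ0D : Ψ0 ∈ D)
    (hvaca : a φ0 = 0) (hvacb : bd Ψ0 = 0)
    (φ Ψ : ℕ → H)
    (hφ : ∀ n : ℕ, φ n = ((Real.sqrt n.factorial : ℂ))⁻¹ • (b ^ n) φ0)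
    (hΨ : ∀ n : ℕ, Ψ n = ((Real.sqrt n.factorial : ℂ))⁻¹ • (ad ^ n) Ψ0)
    (hqb : ∀ f ∈ D, ∀ g ∈ D,
        HasSum (fun n : ℕ => ⟪f, Ψ n⟫_ℂ * ⟪φ n, g⟫_ℂ) ⟪f, g⟫_ℂ ∧
        HasSum (fun n : ℕ => ⟪f, φ n⟫_ℂ * ⟪Ψ n, g⟫_ℂ) ⟪f, g⟫_ℂ)
    (Θ Θi : H →ₗ[ℂ] H)
    (hsa : ∀ f g : H, ⟪Θ f, g⟫_ℂ = ⟪f, Θ g⟫_ℂ)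
    (hinv : (∀ f : H, Θi (Θ f) = f) ∧ (∀ f : H, Θ (Θi f) = f))
    (hΘD : ∀ f ∈ D, Θ f ∈ D)
    (hΨΘ : ∀ n : ℕ, Ψ n = Θ (φ n)) :
    (∀ n : ℕ, b (a (φ n)) = (n : ℂ) • φ n) ∧
    (∀ n : ℕ, ad (bd (Ψ n)) = (n : ℂ) • Ψ n) ∧
    (∀ f ∈ D, b (a f) = Θi (ad (bd (Θ f)))) := by
  obtain ⟨haD, hbD, hadD, hbdD⟩ : (∀ f ∈ D, a f ∈ D) ∧ (∀ f ∈ D, b f ∈ D) ∧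
      (∀ f ∈ D, ad f ∈ D) ∧ (∀ f ∈ D, bd f ∈ D) :=
    ⟨fun f hf => (hstab f hf).1, fun f hf => (hstab f hf).2.1,
      fun f hf => (hstab f hf).2.2.1, fun f hf => (hstab f hf).2.2.2⟩
  have hcomm' : ∀ f ∈ D, bd (ad f) - ad (bd f) = f := fun f hf =>
    IsFormalAdjointOn.commutator_adjoint_eq_self hD hadja hadjb haD hbD hadD hbdD hcomm hf
  have hNφ : ∀ n : ℕ, b (a (φ n)) = (n : ℂ) • φ n := fun n => by
    rw [hφ]; exact raise_lower_pow_apply_of_commutator hbD hcomm hφ0D hvaca n _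
  have hNdΨ : ∀ n : ℕ, ad (bd (Ψ n)) = (n : ℂ) • Ψ n := fun n => by
    rw [hΨ]; exact raise_lower_pow_apply_of_commutator hadD hcomm' hΨ0D hvacb n _
  refine ⟨hNφ, hNdΨ, fun f hf => ?_⟩
  have hφD : ∀ n, φ n ∈ D := fun n =>
    hφ n ▸ D.smul_mem _ (Module.End.pow_apply_mem_of_forall_mem n hbD φ0 hφ0D)
  rw [← hinv.1 (b (a f))]
  have hN : IsFormalAdjointOn D (b ∘ₗ a) (ad ∘ₗ bd) :=
    IsFormalAdjointOn.comp hadja hadjb haD hbdD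
  exact congrArg Θi <| hN.intertwine_of_quasiBasis hD
    (fun f hf => hbD _ (haD f hf)) (fun f hf => hadD _ (hbdD f hf)) hΘD hsa hφD hΨΘ
    (fun f hf g hg => (hqb f hf g hg).1) (fun n => n) (by simpa using hNφ) (by simpa using hNdΨ)
    hf

/-- with `N = ba`, `N† = a†b†` for a `D`-pseudo-bosonic pair `(a,b)`,
one has `N φ_n = n φ_n` and `N† Ψ_n = n Ψ_n`; moreover if `Ψ_n = Θ φ_n` for a
self-adjoint invertible `Θ` preserving `D` together with its inverse, and `(φ_n)`,
`(Ψ_n)` are biorthogonal `D`-quasi bases, then `N f = Θ⁻¹ N† Θ f` for all `f ∈ D`. -/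
theorem statement_19
    {H : Type*} [NormedAddCommGroup H] [InnerProductSpace ℂ H]
    (D : Submodule ℂ H) (hD : Dense (D : Set H))
    (a b ad bd : H →ₗ[ℂ] H)
    (hstab : ∀ f ∈ D, a f ∈ D ∧ b f ∈ D ∧ ad f ∈ D ∧ bd f ∈ D)
    (hadja : ∀ f ∈ D, ∀ g ∈ D, ⟪a f, g⟫_ℂ = ⟪f, ad g⟫_ℂ)
    (hadjb : ∀ f ∈ D, ∀ g ∈ D, ⟪b f, g⟫_ℂ = ⟪f, bd g⟫_ℂ)
    (hcomm : ∀ f ∈ D, a (b f) - b (a f) = f)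
    (φ0 Ψ0 : H) (hφ0D : φ0 ∈ D) (hΨ0D : Ψ0 ∈ D)
    (hφ0 : φ0 ≠ 0) (hΨ0 : Ψ0 ≠ 0)
    (hvaca : a φ0 = 0) (hvacb : bd Ψ0 = 0)
    (hnorm : ⟪φ0, Ψ0⟫_ℂ = 1)
    (φ Ψ : ℕ → H)
    (hφ : ∀ n : ℕ, φ n = ((Real.sqrt n.factorial : ℂ))⁻¹ • (b ^ n) φ0)
    (hΨ : ∀ n : ℕ, Ψ n = ((Real.sqrt n.factorial : ℂ))⁻¹ • (ad ^ n) Ψ0)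
    (hbio : ∀ n m : ℕ, ⟪φ n, Ψ m⟫_ℂ = if n = m then 1 else 0)
    (hqb : ∀ f ∈ D, ∀ g ∈ D,
        HasSum (fun n : ℕ => ⟪f, Ψ n⟫_ℂ * ⟪φ n, g⟫_ℂ) ⟪f, g⟫_ℂ ∧
        HasSum (fun n : ℕ => ⟪f, φ n⟫_ℂ * ⟪Ψ n, g⟫_ℂ) ⟪f, g⟫_ℂ)
    (Θ Θi : H →ₗ[ℂ] H)
    (hsa : ∀ f g : H, ⟪Θ f, g⟫_ℂ = ⟪f, Θ g⟫_ℂ)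
    (hinv : (∀ f : H, Θi (Θ f) = f) ∧ (∀ f : H, Θ (Θi f) = f))
    (hΘD : ∀ f ∈ D, Θ f ∈ D) (hΘiD : ∀ f ∈ D, Θi f ∈ D)
    (hΨΘ : ∀ n : ℕ, Ψ n = Θ (φ n)) :
    (∀ n : ℕ, b (a (φ n)) = (n : ℂ) • φ n) ∧
    (∀ n : ℕ, ad (bd (Ψ n)) = (n : ℂ) • Ψ n) ∧
    (∀ f ∈ D, b (a f) = Θi (ad (bd (Θ f)))) :=
  statement_19_general D hD a b ad bd hstab hadja hadjb hcomm φ0 Ψ0 hφ0D hΨ0D hvaca hvacb φ Ψ hφ hΨ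
    hqb Θ Θi hsa hinv hΘD hΨΘ
end
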